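/- Let A be an n × n positive semidefinite Hermitian complex matrix with eigenvalues λ_1 ≥ λ_2 ≥ … ≥ λ_n ≥ 0 (with multiplicity), let P be an n × n orthogonal projection of rank m, and let c > 0. Then Tr(A P) ≤ c·m + ∑_{i : λ_i ≥ c} λ_i. -/

import Mathlib

open Finset
open scoped ComplexOrder

/-- Trace of a Hermitian idempotent equals its rank. -/
lemma trace_proj_eq_rank {n : ℕ} (P : Matrix (Fin n) (Fin n) ℂ)
    (hPherm : P.IsHermitian) (hPproj : P * P = P) :
    P.trace = (P.rank : ℂ) := by
  classical
  set V := (hPherm.eigenvectorUnitary : Matrix (Fin n) (Fin n) ℂ) with hV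
  set μ := hPherm.eigenvalues with hμ
  have hVV : V * star V = 1 := (Matrix.mem_unitaryGroup_iff).mp hPherm.eigenvectorUnitary.2
  have hVV' : star V * V = 1 := (Matrix.mem_unitaryGroup_iff').mp hPherm.eigenvectorUnitary.2
  have hdiag : star V * P * V = Matrix.diagonal (RCLike.ofReal ∘ μ) :=
    by rw [← hPherm.conjStarAlgAut_star_eigenvectorUnitary, Unitary.conjStarAlgAut_star_apply]
  -- each eigenvalue satisfies μ i ^ 2 = μ i
  have hidem : ∀ i, μ i * μ i = μ i := by
    intro i
    have h2 : (star V * P * V) * (star V * P * V) = star V * P * V := by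
      have ha : (star V * P * V) * (star V * P * V)
          = star V * P * (V * star V) * P * V := by noncomm_ring
      rw [ha, hVV, mul_one, mul_assoc (star V * P) P V,
        show star V * P * (P * V) = star V * (P * (P * V)) by noncomm_ring,
        show P * (P * V) = P * P * V by noncomm_ring, hPproj, mul_assoc]
    rw [hdiag, Matrix.diagonal_mul_diagonal] at h2
    have h3 := congrFun (congrFun h2 i) i
    simp only [Matrix.diagonal_apply_eq, Function.comp_apply, Pi.mul_apply] at h3
    exact_mod_cast h3
  have hzo : ∀ i, μ i = 0 ∨ μ i = 1 := by
    intro i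
    have h0 : μ i * (μ i - 1) = 0 := by nlinarith [hidem i]
    rcases mul_eq_zero.mp h0 with h | h
    · exact Or.inl h
    · exact Or.inr (by linarith [sub_eq_zero.mp h])
  -- trace P = ∑ μ i
  have htr : P.trace = ∑ i, (μ i : ℂ) := by
    conv_lhs => rw [hPherm.spectral_theorem, Unitary.conjStarAlgAut_apply]
    rw [Matrix.trace_mul_cycle, hVV', one_mul, Matrix.trace_diagonal]
    rfl
  -- rank = number of nonzero eigenvalues
  have hr : P.rank = (Finset.univ.filter (fun i => μ i ≠ 0)).card := by
    rw [hPherm.rank_eq_card_non_zero_eigs, Fintype.card_subtype]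
  rw [htr, hr]
  rw [← Finset.sum_filter_add_sum_filter_not Finset.univ (fun i => μ i ≠ 0)]
  have h1 : ∑ i ∈ Finset.univ.filter (fun i => μ i ≠ 0), (μ i : ℂ) =
      (Finset.univ.filter (fun i => μ i ≠ 0)).card := by
    rw [Finset.card_eq_sum_ones, Nat.cast_sum]
    apply Finset.sum_congr rfl
    intro i hi
    rcases hzo i with h | h
    · simp [h] at hi
    · simp [h]
  have h2 : ∑ i ∈ Finset.univ.filter (fun i => ¬ μ i ≠ 0), (μ i : ℂ) = 0 := by
    apply Finset.sum_eq_zero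
    intro i hi
    simp only [Finset.mem_filter, not_not] at hi
    simp [hi.2]
  rw [h1, h2, add_zero]

theorem stmt_9 {n : ℕ} (A : Matrix (Fin n) (Fin n) ℂ) (hA : A.PosSemidef)
    (P : Matrix (Fin n) (Fin n) ℂ) (hPherm : P.IsHermitian) (hPproj : P * P = P)
    (m : ℕ) (hrank : P.rank = m) (c : ℝ) (hc : 0 < c) :
    ((A * P).trace).re ≤
      c * m + ∑ i ∈ Finset.univ.filter (fun i => c ≤ hA.isHermitian.eigenvalues i),
        hA.isHermitian.eigenvalues i := by
  classical
  set e := hA.isHermitian.eigenvalues with he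
  set U := (hA.isHermitian.eigenvectorUnitary : Matrix (Fin n) (Fin n) ℂ) with hU
  set D : Matrix (Fin n) (Fin n) ℂ := Matrix.diagonal (RCLike.ofReal ∘ e) with hD
  have hUU : U * star U = 1 := (Matrix.mem_unitaryGroup_iff).mp hA.isHermitian.eigenvectorUnitary.2
  have hUU' : star U * U = 1 :=
    (Matrix.mem_unitaryGroup_iff').mp hA.isHermitian.eigenvectorUnitary.2
  set Q : Matrix (Fin n) (Fin n) ℂ := star U * P * U with hQ
  -- Q is Hermitian
  have hQherm : Q.IsHermitian := by
    unfold Matrix.IsHermitian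
    rw [hQ, Matrix.conjTranspose_mul, Matrix.conjTranspose_mul, ← Matrix.star_eq_conjTranspose U,
      ← Matrix.star_eq_conjTranspose (star U), star_star, hPherm.eq, mul_assoc]
  -- Q is idempotent
  have hQidem : Q * Q = Q := by
    rw [hQ]
    have ha : (star U * P * U) * (star U * P * U)
        = star U * P * (U * star U) * P * U := by noncomm_ring
    rw [ha, hUU, mul_one,
      show star U * P * P * U = star U * (P * P) * U by noncomm_ring, hPproj]
  -- trace identity
  have htr : (A * P).trace = ∑ i, (e i : ℂ) * Q i i := by
    have hAP : A * P = U * (D * Q) * star U := by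
      conv_lhs => rw [hA.isHermitian.spectral_theorem, Unitary.conjStarAlgAut_apply]
      rw [hQ, hD]
      have key : U * (Matrix.diagonal (RCLike.ofReal ∘ e) * (star U * P * U)) * star U
          = U * Matrix.diagonal (RCLike.ofReal ∘ e) * star U * P * (U * star U) := by
        noncomm_ring
      rw [key, hUU, mul_one]
    rw [hAP, Matrix.trace_mul_cycle, hUU', one_mul, Matrix.trace]
    apply Finset.sum_congr rfl
    intro i _
    have : (D * Q) i i = ∑ j, D i j * Q j i := Matrix.mul_apply
    rw [Matrix.diag]
    rw [this]
    rw [Finset.sum_eq_single i]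
    · simp [hD, Matrix.diagonal_apply_eq]
    · intro j _ hj
      simp [hD, Matrix.diagonal_apply_ne _ (Ne.symm hj)]
    · intro h; exact absurd (Finset.mem_univ i) h
  -- diagonal entries of Q
  set p : Fin n → ℝ := fun i => (Q i i).re with hp
  have hdiagQ : ∀ i, Q i i = ∑ j, (Complex.normSq (Q i j) : ℂ) := by
    intro i
    conv_lhs => rw [← hQidem]
    rw [Matrix.mul_apply]
    apply Finset.sum_congr rfl
    intro j _
    have : Q j i = starRingEnd ℂ (Q i j) := by
      conv_lhs => rw [← hQherm]
      simp [Matrix.conjTranspose_apply]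
    rw [this, Complex.mul_conj]
  have hp_eq : ∀ i, p i = ∑ j, Complex.normSq (Q i j) := by
    intro i
    rw [hp]
    simp only
    rw [hdiagQ i, Complex.re_sum]
    simp
  have hp_nonneg : ∀ i, 0 ≤ p i := by
    intro i
    rw [hp_eq i]
    exact Finset.sum_nonneg fun j _ => Complex.normSq_nonneg _
  have hp_le_one : ∀ i, p i ≤ 1 := by
    intro i
    have h2 : Complex.normSq (Q i i) ≤ ∑ j, Complex.normSq (Q i j) :=
      Finset.single_le_sum (f := fun j => Complex.normSq (Q i j))
        (fun j _ => Complex.normSq_nonneg _) (Finset.mem_univ i)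
    have h3 : p i * p i ≤ Complex.normSq (Q i i) := by
      rw [Complex.normSq_apply, hp]
      nlinarith [sq_nonneg (Q i i).im]
    have h4 : p i * p i ≤ p i := by rw [hp_eq i] at *; linarith
    nlinarith [hp_nonneg i]
  -- sum of p = m
  have hsum_p : ∑ i, p i = (m : ℝ) := by
    have htrQ : Q.trace = P.trace := by
      rw [hQ, Matrix.trace_mul_cycle, hUU, one_mul]
    have h1 : Q.trace = (m : ℂ) := by
      rw [htrQ, trace_proj_eq_rank P hPherm hPproj, hrank]
    have h2 : (Q.trace).re = (m : ℝ) := by rw [h1]; simp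
    rw [← h2, Matrix.trace, Complex.re_sum]
    rfl
  -- eigenvalues nonneg
  have he_nonneg : ∀ i, 0 ≤ e i := hA.eigenvalues_nonneg
  -- final computation
  have hre : ((A * P).trace).re = ∑ i, e i * p i := by
    rw [htr, Complex.re_sum]
    apply Finset.sum_congr rfl
    intro i _
    rw [hp]
    simp [Complex.mul_re]
  rw [hre]
  rw [← Finset.sum_filter_add_sum_filter_not Finset.univ (fun i => c ≤ e i)]
  rw [add_comm (c * (m : ℝ)) _]
  apply add_le_add
  · apply Finset.sum_le_sum
    intro i hi
    calc e i * p i ≤ e i * 1 := mul_le_mul_of_nonneg_left (hp_le_one i) (he_nonneg i)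
      _ = e i := mul_one _
  · calc ∑ i ∈ Finset.univ.filter (fun i => ¬ c ≤ e i), e i * p i
        ≤ ∑ i ∈ Finset.univ.filter (fun i => ¬ c ≤ e i), c * p i := by
          apply Finset.sum_le_sum
          intro i hi
          simp only [Finset.mem_filter, not_le] at hi
          exact mul_le_mul_of_nonneg_right (le_of_lt hi.2) (hp_nonneg i)
      _ ≤ ∑ i, c * p i := by
          apply Finset.sum_le_sum_of_subset_of_nonneg (Finset.filter_subset _ _)
          intro i _ _
          exact mul_nonneg (le_of_lt hc) (hp_nonneg i)
      _ = c * (m : ℝ) := by rw [← Finset.mul_sum, hsum_p]
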